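/- arXiv:1407.2676 — 8 statements merged into one kernel-verified Lean document; each statement's English description precedes it below -/
import Mathlib

section
/- If $\bar v^0 = 0$ and $\bar v^{n+1} = \bar v^n + \frac{1}{n+1}(c - (1-\gamma)\bar v^n)$ with $c > 0$ and $0 < \gamma < 1$, then the sequence $(\bar v^n)$ is concave as a function of $n$; that is, the increments $\bar v^{n+1} - \bar v^n$ are nonincreasing in $n$. -/
theorem stmt_1 (c γ : ℝ) (hc : 0 < c) (hγ0 : 0 < γ) (hγ1 : γ < 1)
    (v : ℕ → ℝ) (h0 : v 0 = 0)
    (hrec : ∀ n : ℕ, v (n + 1) = v n + (1 / (n + 1 : ℝ)) * (c - (1 - γ) * v n)) :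
    ∀ n : ℕ, v (n + 2) - v (n + 1) ≤ v (n + 1) - v n := by
  have hpos : ∀ n : ℕ, 0 < c - (1 - γ) * v n := by
    intro n
    induction n with
    | zero => simpa [h0] using hc
    | succ k ih =>
      have hk : (0:ℝ) < (k:ℝ) + 1 := by positivity
      have heq : c - (1 - γ) * v (k+1)
          = (c - (1-γ)*v k) * (1 - (1-γ)/((k:ℝ)+1)) := by
        rw [hrec k]; push_cast; field_simp; ring
      rw [heq]
      apply mul_pos ih
      have : (1-γ)/((k:ℝ)+1) < 1 := by
        rw [div_lt_one hk]; linarith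
      linarith
  intro n
  have hn1 : (0:ℝ) < (n:ℝ) + 1 := by positivity
  have hn2 : (0:ℝ) < (n:ℝ) + 2 := by positivity
  have h1 := hrec n
  have h2 := hrec (n+1)
  have ha := hpos n
  push_cast at h2
  rw [h2, h1]
  have L : v n + 1 / ((n:ℝ) + 1) * (c - (1 - γ) * v n) +
        1 / ((n:ℝ) + 1 + 1) * (c - (1 - γ) * (v n + 1 / ((n:ℝ) + 1) * (c - (1 - γ) * v n))) -
      (v n + 1 / ((n:ℝ) + 1) * (c - (1 - γ) * v n))
      = (c - (1 - γ) * v n) * ((n:ℝ) + γ) / (((n:ℝ) + 1) * ((n:ℝ) + 2)) := by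
    field_simp
    ring
  have R : v n + 1 / ((n:ℝ) + 1) * (c - (1 - γ) * v n) - v n
      = (c - (1 - γ) * v n) / ((n:ℝ) + 1) := by
    field_simp
    ring
  rw [L, R, div_le_div_iff₀ (by positivity) hn1]
  nlinarith [mul_pos ha hn2]
end

section
/- If $\bar v^0 = 0$ and $\bar v^{n+1} = \bar v^n + \frac{1}{n+1}(c - (1-\gamma)\bar v^n)$ with $c > 0$ and $0 < \gamma < 1$, then for all $n \ge 0$, $\bar v^n \ge \frac{c}{1-\gamma}\left(1 - (n+1)^{-(1-\gamma)}\right)$. -/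
open Real

theorem stmt_2 (c γ : ℝ) (hc : 0 < c) (hγ0 : 0 < γ) (hγ1 : γ < 1)
    (v : ℕ → ℝ) (h0 : v 0 = 0)
    (hrec : ∀ n : ℕ, v (n + 1) = v n + (1 / (n + 1 : ℝ)) * (c - (1 - γ) * v n)) :
    ∀ n : ℕ, v n ≥ c / (1 - γ) * (1 - ((n : ℝ) + 1) ^ (-(1 - γ))) := by
  set α : ℝ := 1 - γ with hα
  have hα0 : 0 < α := by linarith
  have hα1 : α < 1 := by linarith
  intro n
  induction n with
  | zero => simp [h0, Real.one_rpow]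
  | succ n ih =>
    have ht : (1 : ℝ) ≤ (n : ℝ) + 1 := by have := Nat.cast_nonneg (α := ℝ) n; linarith
    set t : ℝ := (n : ℝ) + 1 with hts
    have ht0 : (0 : ℝ) < t := by linarith
    have hl0 : 0 ≤ 1 - α / t := by
      have : α / t ≤ 1 := by rw [div_le_one ht0]; linarith
      linarith
    have hb0 : (0 : ℝ) < 1 + 1 / t := by positivity
    have hpos : (0 : ℝ) < (1 + 1 / t) ^ α := Real.rpow_pos_of_pos hb0 _
    have hnegpos : (0 : ℝ) < (1 + 1 / t) ^ (-α) := Real.rpow_pos_of_pos hb0 _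
    have hinv : (1 + 1 / t) ^ (-α) * (1 + 1 / t) ^ α = 1 := by
      rw [← Real.rpow_add hb0]; simp
    have hb : (1 + 1 / t) ^ α ≤ 1 + α * (1 / t) := by
      apply rpow_one_add_le_one_add_mul_self _ hα0.le hα1.le
      have : (0:ℝ) ≤ 1 / t := by positivity
      linarith
    have hmul : (1 - α / t) * (1 + 1 / t) ^ α ≤ 1 := by
      calc (1 - α / t) * (1 + 1 / t) ^ α ≤ (1 - α / t) * (1 + α * (1 / t)) :=
            mul_le_mul_of_nonneg_left hb hl0
        _ = 1 - (α / t) * (α / t) := by field_simp; ring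
        _ ≤ 1 := by nlinarith [sq_nonneg (α / t)]
    have hstep : 1 - α / t ≤ (1 + 1 / t) ^ (-α) := by nlinarith
    -- key inequality : t^(-α) * (1 - α/t) ≤ (t+1)^(-α)
    have key : t ^ (-α) * (1 - α / t) ≤ (t + 1) ^ (-α) := by
      have heq : (t + 1) ^ (-α) = t ^ (-α) * (1 + 1 / t) ^ (-α) := by
        rw [← Real.mul_rpow ht0.le hb0.le]
        congr 1
        field_simp
      rw [heq]
      exact mul_le_mul_of_nonneg_left hstep (Real.rpow_pos_of_pos ht0 _).le
    have hrw : v (n + 1) = v n * (1 - α / t) + c / t := by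
      rw [hrec n]
      field_simp
      ring
    have htpos : (0 : ℝ) < t ^ (-α) := Real.rpow_pos_of_pos ht0 _
    have hcα : 0 < c / α := div_pos hc hα0
    have hIH : v n ≥ c / α * (1 - t ^ (-α)) := ih
    have h1 : v (n + 1) ≥ c / α * (1 - t ^ (-α)) * (1 - α / t) + c / t := by
      rw [hrw]
      have := mul_le_mul_of_nonneg_right hIH hl0
      linarith
    have h2 : c / α * (1 - t ^ (-α)) * (1 - α / t) + c / t
        = c / α * (1 - t ^ (-α) * (1 - α / t)) := by
      field_simp
      ring
    have h3 : c / α * (1 - t ^ (-α) * (1 - α / t)) ≥ c / α * (1 - (t + 1) ^ (-α)) := by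
      apply mul_le_mul_of_nonneg_left _ hcα.le
      linarith
    have : v (n + 1) ≥ c / α * (1 - (t + 1) ^ (-α)) := by linarith [h1, h2 ▸ h1, h3]
    calc v (n + 1) ≥ c / α * (1 - (t + 1) ^ (-α)) := this
      _ = c / (1 - γ) * (1 - ((↑(n + 1) : ℝ) + 1) ^ (-(1 - γ))) := by
          push_cast
          rw [hts, hα]
end

section
/- If $\bar v^0 = 0$ and $\bar v^{n+1} = \bar v^n + \frac{1}{n+1}(c - (1-\gamma)\bar v^n)$ with $c > 0$ and $0 < \gamma < 1$, then for all $n \ge 1$, $(n+1)\,(\bar v^{n+1} - \bar v^n) \le \bar v^{n+1}$; i.e. the forward increment at step $n$, multiplied by $n+1$, is at most the next iterate. -/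
/-!
By the recurrence, `(n + 1) (v (n + 1) - v n) = c - (1 - γ) v n`. The iterates satisfy
`v (n + 1) ≥ c`, since `v 1 = c` and `v (n + 1) - c` is a nonnegative combination of
`v n - c` and `γ c`. Hence `v n ≥ 0`, so `c - (1 - γ) v n ≤ c ≤ v (n + 1)`.
-/

section Recurrence

variable {c γ : ℝ} {v : ℕ → ℝ}

theorem succ_mul_sub_eq_of_recurrence
    (hrec : ∀ n : ℕ, v (n + 1) = v n + (1 / (n + 1 : ℝ)) * (c - (1 - γ) * v n)) (n : ℕ) :
    ((n : ℝ) + 1) * (v (n + 1) - v n) = c - (1 - γ) * v n := by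
  rw [hrec n]
  field_simp
  ring

theorem le_succ_of_recurrence (hc : 0 ≤ c) (hγ : 0 ≤ γ) (h0 : v 0 = 0)
    (hrec : ∀ n : ℕ, v (n + 1) = v n + (1 / (n + 1 : ℝ)) * (c - (1 - γ) * v n)) (n : ℕ) :
    c ≤ v (n + 1) := by
  induction n with
  | zero => simp [hrec 0, h0]
  | succ n ih =>
    have hstep : ((n : ℝ) + 2) * (v (n + 2) - c) = (n + 1 + γ) * (v (n + 1) - c) + γ * c := by
      have h := succ_mul_sub_eq_of_recurrence hrec (n + 1)
      push_cast at h
      linear_combination h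
    have hprod : 0 ≤ ((n : ℝ) + 2) * (v (n + 2) - c) := by
      rw [hstep]
      have := sub_nonneg.2 ih
      positivity
    exact sub_nonneg.1 ((mul_nonneg_iff_of_pos_left (by positivity)).1 hprod)

theorem nonneg_of_recurrence (hc : 0 ≤ c) (hγ : 0 ≤ γ) (h0 : v 0 = 0)
    (hrec : ∀ n : ℕ, v (n + 1) = v n + (1 / (n + 1 : ℝ)) * (c - (1 - γ) * v n)) :
    ∀ n : ℕ, 0 ≤ v n
  | 0 => h0.ge
  | n + 1 => hc.trans (le_succ_of_recurrence hc hγ h0 hrec n)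

end Recurrence

theorem stmt_3 (c γ : ℝ) (hc : 0 < c) (hγ0 : 0 < γ) (hγ1 : γ < 1)
    (v : ℕ → ℝ) (h0 : v 0 = 0)
    (hrec : ∀ n : ℕ, v (n + 1) = v n + (1 / (n + 1 : ℝ)) * (c - (1 - γ) * v n)) :
    ∀ n : ℕ, 1 ≤ n → ((n : ℝ) + 1) * (v (n + 1) - v n) ≤ v (n + 1) := by
  intro n _
  have hvn : 0 ≤ (1 - γ) * v n :=
    mul_nonneg (sub_nonneg.2 hγ1.le) (nonneg_of_recurrence hc.le hγ0.le h0 hrec n)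
  calc ((n : ℝ) + 1) * (v (n + 1) - v n) = c - (1 - γ) * v n :=
        succ_mul_sub_eq_of_recurrence hrec n
    _ ≤ c := sub_le_self c hvn
    _ ≤ v (n + 1) := le_succ_of_recurrence hc.le hγ0.le h0 hrec n
end

section
/- If $\bar v^0 = 0$ and $\bar v^{n+1} = \bar v^n + \frac{1}{n+1}(c - (1-\gamma)\bar v^n)$ with $c > 0$ and $\frac{-1+\sqrt 5}{2} < \gamma < 1$, then for all $n \ge 1$, $\bar v^n \le \frac{c}{1-\gamma}\left[1 - b\, n^{-(1-\gamma)} - \frac{1-\gamma}{\gamma}\frac{1}{n}\right]$, where $b = \frac{\gamma^2 + \gamma - 1}{\gamma}$. -/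
/-!
Write `α = 1 - γ`. The recursion reads `v (n + 1) = (1 - α / (n + 1)) v n + c / (n + 1)`, an affine
map with nonnegative slope, so any `U` with `v 1 ≤ U 1` whose image under the `n`-th step is at most
`U (n + 1)` dominates `v`. For `U x = c / α * (1 - b x ^ (-α) - κ / x)` with `b, κ ≥ 0` (this is
where `γ > (√5 - 1) / 2` enters) the step inequality reduces to the Bernoulli bound
`(x / (x + 1)) ^ α ≤ 1 - α / (x + 1)`; the constants
`b = (γ ^ 2 + γ - 1) / γ` and `κ = (1 - γ) / γ` satisfy `b + κ = γ`, which makes `U 1 = c = v 1`.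
-/

open Real

lemma add_one_rpow_neg_le {x α : ℝ} (hx : 0 < x) (hα0 : 0 ≤ α) (hα1 : α ≤ 1) :
    (x + 1) ^ (-α) ≤ (1 - α / (x + 1)) * x ^ (-α) := by
  have hx1 : 0 < x + 1 := by linarith
  have hbern : (x / (x + 1)) ^ α ≤ 1 - α / (x + 1) := by
    have hs : -1 ≤ -(1 / (x + 1)) := by
      rw [neg_le_neg_iff, div_le_one hx1]; linarith
    have h := rpow_one_add_le_one_add_mul_self hs hα0 hα1
    rwa [show 1 + -(1 / (x + 1)) = x / (x + 1) by field_simp; ring,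
      show 1 + α * -(1 / (x + 1)) = 1 - α / (x + 1) by ring] at h
  calc (x + 1) ^ (-α) = (x / (x + 1)) ^ α * x ^ (-α) := by
        rw [div_rpow hx.le hx1.le, rpow_neg hx.le, rpow_neg hx1.le]
        field_simp [(rpow_pos_of_pos hx α).ne']
    _ ≤ (1 - α / (x + 1)) * x ^ (-α) :=
        mul_le_mul_of_nonneg_right hbern (rpow_nonneg hx.le _)

lemma affine_step_rpow_bound_le {α b κ c x : ℝ} (hα0 : 0 < α) (hα1 : α ≤ 1) (hb : 0 ≤ b) (hκ : 0 ≤ κ)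
    (hc : 0 ≤ c) (hx : 0 < x) :
    (1 - α / (x + 1)) * (c / α * (1 - b * x ^ (-α) - κ * (1 / x))) + c / (x + 1)
      ≤ c / α * (1 - b * (x + 1) ^ (-α) - κ * (1 / (x + 1))) := by
  set P := x ^ (-α)
  set Q := (x + 1) ^ (-α)
  have hQ : (x + 1) * Q ≤ (x + 1 - α) * P := by
    have h := mul_le_mul_of_nonneg_left (add_one_rpow_neg_le hx hα0.le hα1)
      (show 0 ≤ x + 1 by linarith)
    rwa [← mul_assoc, mul_sub, mul_one, mul_div_cancel₀ _ (by linarith)] at h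
  have hgap : 0 ≤ κ * (1 - α) + b * x * ((x + 1 - α) * P - (x + 1) * Q) :=
    add_nonneg (mul_nonneg hκ (by linarith)) (mul_nonneg (by positivity) (by linarith))
  have hdiff : c / α * (1 - b * Q - κ * (1 / (x + 1)))
      - ((1 - α / (x + 1)) * (c / α * (1 - b * P - κ * (1 / x))) + c / (x + 1))
      = c / α / (x * (x + 1)) * (κ * (1 - α) + b * x * ((x + 1 - α) * P - (x + 1) * Q)) := by
    field_simp
    ring
  have := mul_nonneg (show 0 ≤ c / α / (x * (x + 1)) by positivity) hgap
  linarith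

lemma le_of_affine_recursion {v U a d : ℕ → ℝ} {k : ℕ} (ha : ∀ n, 0 ≤ a n)
    (hv : ∀ n, v (n + 1) = a n * v n + d n) (hU : ∀ n, k ≤ n → a n * U n + d n ≤ U (n + 1))
    (hk : v k ≤ U k) : ∀ n, k ≤ n → v n ≤ U n := by
  intro n hn
  induction n, hn using Nat.le_induction with
  | base => exact hk
  | succ n hn ih =>
    rw [hv]
    exact (add_le_add_left (mul_le_mul_of_nonneg_left ih (ha n)) _).trans (hU n hn)

theorem stmt_4 (c γ : ℝ) (hc : 0 < c) (hγ0 : (-1 + Real.sqrt 5) / 2 < γ) (hγ1 : γ < 1)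
    (v : ℕ → ℝ) (h0 : v 0 = 0)
    (hrec : ∀ n : ℕ, v (n + 1) = v n + (1 / (n + 1 : ℝ)) * (c - (1 - γ) * v n)) :
    ∀ n : ℕ, 1 ≤ n →
      v n ≤ c / (1 - γ) *
        (1 - (γ ^ 2 + γ - 1) / γ * (n : ℝ) ^ (-(1 - γ)) - (1 - γ) / γ * (1 / (n : ℝ))) := by
  have h5 : Real.sqrt 5 ^ 2 = 5 := Real.sq_sqrt (by norm_num)
  have hγ : 0 < γ := by nlinarith [Real.sqrt_nonneg 5]
  have hb : 0 < γ ^ 2 + γ - 1 := by nlinarith [Real.sqrt_nonneg 5]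
  have hα : 0 < 1 - γ := by linarith
  refine le_of_affine_recursion (a := fun n => 1 - (1 - γ) / (n + 1)) (d := fun n => c / (n + 1))
    (fun n => ?_) (fun n => ?_) (fun n _ => ?_) ?_
  · rw [sub_nonneg, div_le_one (by positivity)]
    linarith [(n.cast_nonneg : (0 : ℝ) ≤ n)]
  · rw [hrec n]
    field_simp
    ring
  · push_cast
    exact affine_step_rpow_bound_le hα (by linarith) (by positivity) (by positivity) hc.le
      (by positivity)
  · have hv1 : v 1 = c := by simpa [h0] using hrec 0
    rw [hv1, Nat.cast_one, one_rpow, div_one]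
    refine le_of_eq ?_
    field_simp
    ring
end

section
/- Let $0 < \gamma < 1$, $c \in \mathbb{R}$, $\sigma^2 > 0$. Define sequences with $\alpha_0 = 1$, $\delta^1 = 1$, $\lambda^1 = 1$, and for $n \ge 2$: $\alpha_{n-1} = \frac{(1-\gamma)\lambda^{n-1}\sigma^2 + (1-(1-\gamma)\delta^{n-1})^2 c^2}{(1-\gamma)^2\lambda^{n-1}\sigma^2 + (1-(1-\gamma)\delta^{n-1})^2 c^2 + \sigma^2}$, $\delta^n = \alpha_{n-1} + (1-(1-\gamma)\alpha_{n-1})\delta^{n-1}$, $\lambda^n = \alpha_{n-1}^2 + (1-(1-\gamma)\alpha_{n-1})^2\lambda^{n-1}$. Then $\alpha_{n-1} \ge \frac{1-\gamma}{n}$ for all $n \ge 1$. -/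
set_option maxHeartbeats 1000000 in
theorem stmt_12 (γ c σ2 : ℝ) (hγ0 : 0 < γ) (hγ1 : γ < 1) (hσ : 0 < σ2) 
    (α δ lam : ℕ → ℝ)
    (hα0 : α 0 = 1) (hδ1 : δ 1 = 1) (hlam1 : lam 1 = 1)
    (hα : ∀ n : ℕ, 1 ≤ n →
      α n = ((1 - γ) * lam n * σ2 + (1 - (1 - γ) * δ n) ^ 2 * c ^ 2) /
            ((1 - γ) ^ 2 * lam n * σ2 + (1 - (1 - γ) * δ n) ^ 2 * c ^ 2 + σ2))
    (hδ : ∀ n : ℕ, 1 ≤ n → δ (n + 1) = α n + (1 - (1 - γ) * α n) * δ n)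
    (hlam : ∀ n : ℕ, 1 ≤ n → lam (n + 1) = (α n) ^ 2 + (1 - (1 - γ) * α n) ^ 2 * lam n) :
    ∀ n : ℕ, 1 ≤ n → (1 - γ) / (n : ℝ) ≤ α (n - 1) := by
  set b : ℝ := 1 - γ with hb
  have hb0 : 0 < b := by simp [hb]; linarith
  have hb1 : b < 1 := by simp [hb]; linarith
  -- Step 1: lam n ≥ 1/n for n ≥ 1
  have hlamge : ∀ n : ℕ, 1 ≤ n → (1 : ℝ) / n ≤ lam n := by
    intro n hn
    induction n, hn using Nat.le_induction with
    | base => simp [hlam1]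
    | succ n hn ih =>
      have hrec := hlam n hn
      set a := α n with ha
      have hnpos : (0:ℝ) < n := by exact_mod_cast hn
      have h1 : (1 - b * a) ^ 2 / n ≤ (1 - b * a) ^ 2 * lam n := by
        rw [div_le_iff₀ hnpos] at *
        nlinarith [sq_nonneg (1 - b * a), ih, mul_pos hnpos hnpos]
      have hb2 : (0:ℝ) ≤ 1 - b^2 := by nlinarith
      have hnb : (0:ℝ) < (n:ℝ) + b^2 := by positivity
      have hmain : (n:ℝ) ≤ (n:ℝ)*a^2*((n:ℝ)+1) + (1-b*a)^2*((n:ℝ)+1) := by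
        nlinarith [sq_nonneg (((n:ℝ) + b^2) * a - b), hnb,
          mul_nonneg hnpos.le hb2,
          mul_nonneg (mul_nonneg hnpos.le hnpos.le) (sq_nonneg a),
          mul_nonneg hnpos.le (sq_nonneg ((1:ℝ) - b*a))]
      have hcomb : a ^ 2 + (1 - b * a) ^ 2 / n = ((n:ℝ)*a^2 + (1-b*a)^2) / n := by
        field_simp
      have h2 : (1 : ℝ) / (n + 1) ≤ a ^ 2 + (1 - b * a) ^ 2 / n := by
        rw [hcomb, div_le_div_iff₀ (by positivity) hnpos]
        nlinarith [hmain]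
      have : ((n:ℝ) + 1) = ((n+1 : ℕ) : ℝ) := by push_cast; ring
      rw [hrec]
      calc (1:ℝ) / ((n+1:ℕ):ℝ) = 1 / ((n:ℝ)+1) := by push_cast; ring_nf
        _ ≤ a ^ 2 + (1 - b * a) ^ 2 / n := h2
        _ ≤ a ^ 2 + (1 - b * a) ^ 2 * lam n := by linarith
  -- Step 2: conclude
  intro n hn
  match n, hn with
  | 1, _ => simpa [hα0] using by linarith
  | (m+2), _ =>
    have hm1 : 1 ≤ m + 1 := Nat.le_add_left 1 m
    have hl := hlamge (m+1) hm1
    have hA := hα (m+1) hm1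
    have hmpos : (0:ℝ) < (m:ℝ) + 1 := by positivity
    set L := lam (m+1)
    set B := (1 - b * δ (m+1)) ^ 2 * c ^ 2 with hB
    have hBnn : 0 ≤ B := by positivity
    have hLpos : 0 < L := lt_of_lt_of_le (by positivity) hl
    have hDpos : 0 < b ^ 2 * L * σ2 + B + σ2 := by positivity
    have hcast : ((m+2 : ℕ) : ℝ) = (m:ℝ) + 2 := by push_cast; ring
    push_cast at hl
    have h3 : σ2 ≤ ((m:ℝ)+1) * L * σ2 := by
      have := (div_le_iff₀ hmpos).mp hl
      nlinarith
    have hb2 : (0:ℝ) ≤ 1 - b^2 := by nlinarith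
    have h4 : b * σ2 ≤ b * (((m:ℝ)+1) * L * σ2) := mul_le_mul_of_nonneg_left h3 hb0.le
    have h5 : (0:ℝ) ≤ b * (1 - b^2) * L * σ2 :=
      mul_nonneg (mul_nonneg (mul_nonneg hb0.le hb2) hLpos.le) hσ.le
    have h6 : (0:ℝ) ≤ B * ((m:ℝ) + 2 - b) :=
      mul_nonneg hBnn (by linarith)
    have : b / ((m:ℝ) + 2) ≤ (b * L * σ2 + B) / (b ^ 2 * L * σ2 + B + σ2) := by
      rw [div_le_div_iff₀ (by positivity) hDpos]
      nlinarith [h4, h5, h6]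
    simpa [hcast, hA] using this
end

section
/- Under the OSAVI recursion (with $\alpha_0 = 1$), $\lambda^n \ge \frac{1}{n}$ for all $n \ge 1$. -/
theorem stmt_13 (γ c σ2 : ℝ) (hγ0 : 0 < γ) (hγ1 : γ < 1) (hσ : 0 < σ2) 
    (α δ lam : ℕ → ℝ)
    (hα0 : α 0 = 1) (hδ1 : δ 1 = 1) (hlam1 : lam 1 = 1)
    (hα : ∀ n : ℕ, 1 ≤ n →
      α n = ((1 - γ) * lam n * σ2 + (1 - (1 - γ) * δ n) ^ 2 * c ^ 2) /
            ((1 - γ) ^ 2 * lam n * σ2 + (1 - (1 - γ) * δ n) ^ 2 * c ^ 2 + σ2))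
    (hδ : ∀ n : ℕ, 1 ≤ n → δ (n + 1) = α n + (1 - (1 - γ) * α n) * δ n)
    (hlam : ∀ n : ℕ, 1 ≤ n → lam (n + 1) = (α n) ^ 2 + (1 - (1 - γ) * α n) ^ 2 * lam n) :
    ∀ n : ℕ, 1 ≤ n → 1 / (n : ℝ) ≤ lam n := by
  intro n hn
  induction n, hn using Nat.le_induction with
  | base => simp [hlam1]
  | succ n hn ih =>
    rw [hlam n hn]
    have hnpos : (0:ℝ) < n := by exact_mod_cast hn
    have hlpos : 0 < lam n := lt_of_lt_of_le (by positivity) ih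
    have h1 : 1 ≤ (n:ℝ) * lam n := by
      rw [div_le_iff₀ hnpos] at ih; linarith [ih]
    -- key quadratic bound
    have hB : lam n ≤ (((1-γ)*α n)^2 + (1 - (1-γ)*α n)^2 * lam n) * (1 + lam n) := by
      nlinarith [sq_nonneg ((1-γ)*α n*(1+lam n) - lam n)]
    have hA : ((1-γ)*α n)^2 ≤ (α n)^2 := by
      nlinarith [sq_nonneg (α n), mul_nonneg (mul_nonneg hγ0.le (by linarith : (0:ℝ) ≤ 2-γ)) (sq_nonneg (α n))]
    push_cast
    rw [div_le_iff₀ (by positivity)]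
    nlinarith [hB, hA, h1, hlpos, hnpos, sq_nonneg (1 - (1-γ)*α n),
      mul_le_mul_of_nonneg_right hA (by positivity : (0:ℝ) ≤ ((n:ℝ)+1)*(1+lam n)),
      mul_le_mul_of_nonneg_right hB (by positivity : (0:ℝ) ≤ (n:ℝ)+1)]
end

section
/- Under the OSAVI recursion with $\alpha_0 = 1$ and $c \ne 0$, $\lim_{n\to\infty} \delta^n = \frac{1}{1-\gamma}$. -/
/-!
Write `β = 1 - γ` and `eₙ = 1 - β δₙ`. The recursion for `δ` says `eₙ₊₁ = (1 - β αₙ) eₙ`,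
and as long as `λₙ ≥ 0` (which the recursion for `λ` preserves) the step size satisfies
`β αₙ < 1` and `αₙ ≥ eₙ² c² / (eₙ² c² + σ²)`. Hence `eₙ ≥ 0` and
`eₙ₊₁ ≤ eₙ - g eₙ` with `g x = β x · x² c² / (x² c² + σ²)` continuous and positive for `x > 0`
(here `c ≠ 0` enters). So `eₙ` decreases to a limit `L` with `g L ≤ 0`, forcing `L = 0`.
-/

open Filter Topology

theorem tendsto_zero_of_succ_le_sub {u : ℕ → ℝ} {g : ℝ → ℝ} (hg : Continuous g)
    (hg_pos : ∀ x, 0 < x → 0 < g x) (hu_nonneg : ∀ n, 0 ≤ u n)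
    (hu_succ : ∀ n, u (n + 1) ≤ u n - g (u n)) : Tendsto u atTop (𝓝 0) := by
  have hg_nonneg : ∀ x, 0 ≤ x → 0 ≤ g x := by
    intro x hx
    rcases hx.eq_or_lt with rfl | hx
    · exact ge_of_tendsto (hg.continuousWithinAt (s := Set.Ioi 0) (x := 0))
        (eventually_nhdsWithin_of_forall fun y hy => (hg_pos y hy).le)
    · exact (hg_pos x hx).le
  have hanti : Antitone u :=
    antitone_nat_of_succ_le fun n => by linarith [hu_succ n, hg_nonneg _ (hu_nonneg n)]
  have hL : Tendsto u atTop (𝓝 (⨅ n, u n)) :=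
    tendsto_atTop_ciInf hanti ⟨0, Set.forall_mem_range.2 hu_nonneg⟩
  have hL_nonneg : 0 ≤ ⨅ n, u n := le_ciInf hu_nonneg
  have hL_fixed : ⨅ n, u n ≤ (⨅ n, u n) - g (⨅ n, u n) :=
    le_of_tendsto_of_tendsto' (hL.comp (tendsto_add_atTop_nat 1))
      (hL.sub ((hg.tendsto _).comp hL)) hu_succ
  rcases hL_nonneg.eq_or_lt with hL0 | hL_pos
  · rwa [← hL0] at hL
  · linarith [hg_pos _ hL_pos]

/-- `αₙ = osaviStepSize (1 - γ) σ² c λₙ (1 - (1 - γ) δₙ)`. -/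
noncomputable def osaviStepSize (β σ2 c l x : ℝ) : ℝ :=
  (β * l * σ2 + x ^ 2 * c ^ 2) / (β ^ 2 * l * σ2 + x ^ 2 * c ^ 2 + σ2)

section osaviStepSize

variable {β σ2 c l x : ℝ}

theorem div_le_osaviStepSize (hβ0 : 0 ≤ β) (hβ1 : β ≤ 1) (hl : 0 ≤ l) (hσ : 0 < σ2) :
    x ^ 2 * c ^ 2 / (x ^ 2 * c ^ 2 + σ2) ≤ osaviStepSize β σ2 c l x := by
  rw [osaviStepSize, div_le_div_iff₀ (by positivity) (by positivity)]
  have hN : 0 ≤ β * l * σ2 := by positivity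
  nlinarith [mul_nonneg (mul_nonneg hN (sub_nonneg.2 hβ1)) (by positivity : 0 ≤ x ^ 2 * c ^ 2)]

theorem mul_osaviStepSize_lt_one (hβ1 : β ≤ 1) (hl : 0 ≤ l) (hσ : 0 < σ2) :
    β * osaviStepSize β σ2 c l x < 1 := by
  rw [osaviStepSize, mul_div_assoc', div_lt_one (by positivity)]
  nlinarith [mul_nonneg (sub_nonneg.2 hβ1) (by positivity : 0 ≤ x ^ 2 * c ^ 2)]

theorem osavi_error_nonneg (hβ1 : β ≤ 1) (hl : 0 ≤ l) (hσ : 0 < σ2) (hx : 0 ≤ x) :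
    0 ≤ (1 - β * osaviStepSize β σ2 c l x) * x :=
  mul_nonneg (sub_nonneg.2 (mul_osaviStepSize_lt_one (c := c) (x := x) hβ1 hl hσ).le) hx

theorem osavi_error_le (hβ0 : 0 ≤ β) (hβ1 : β ≤ 1) (hl : 0 ≤ l) (hσ : 0 < σ2) (hx : 0 ≤ x) :
    (1 - β * osaviStepSize β σ2 c l x) * x ≤
      x - β * x * (x ^ 2 * c ^ 2 / (x ^ 2 * c ^ 2 + σ2)) := by
  nlinarith [mul_le_mul_of_nonneg_left (div_le_osaviStepSize (c := c) (x := x) hβ0 hβ1 hl hσ)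
    (mul_nonneg hβ0 hx)]

theorem tendsto_zero_of_osavi_error {u l : ℕ → ℝ} (hβ0 : 0 < β) (hβ1 : β ≤ 1) (hσ : 0 < σ2)
    (hc : c ≠ 0) (hl : ∀ n, 0 ≤ l n) (hu0 : 0 ≤ u 0)
    (hu_succ : ∀ n, u (n + 1) = (1 - β * osaviStepSize β σ2 c (l n) (u n)) * u n) :
    Tendsto u atTop (𝓝 0) := by
  have hu_nonneg : ∀ n, 0 ≤ u n := fun n => by
    induction n with
    | zero => exact hu0
    | succ n ih => exact hu_succ n ▸ osavi_error_nonneg hβ1 (hl n) hσ ih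
  refine tendsto_zero_of_succ_le_sub
    (g := fun x => β * x * (x ^ 2 * c ^ 2 / (x ^ 2 * c ^ 2 + σ2)))
    (by fun_prop (disch := intro x; positivity)) (fun x hx => by positivity) hu_nonneg
    fun n => ?_
  rw [hu_succ]
  exact osavi_error_le hβ0.le hβ1 (hl n) hσ (hu_nonneg n)

end osaviStepSize

theorem stmt_15_general (γ c σ2 : ℝ) (hγ0 : 0 < γ) (hγ1 : γ < 1) (hσ : 0 < σ2) (hc : c ≠ 0)
    (α δ lam : ℕ → ℝ)
    (hδ1 : δ 1 = 1) (hlam1 : lam 1 = 1)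
    (hα : ∀ n : ℕ, 1 ≤ n →
      α n = ((1 - γ) * lam n * σ2 + (1 - (1 - γ) * δ n) ^ 2 * c ^ 2) /
            ((1 - γ) ^ 2 * lam n * σ2 + (1 - (1 - γ) * δ n) ^ 2 * c ^ 2 + σ2))
    (hδ : ∀ n : ℕ, 1 ≤ n → δ (n + 1) = α n + (1 - (1 - γ) * α n) * δ n)
    (hlam : ∀ n : ℕ, 1 ≤ n → lam (n + 1) = (α n) ^ 2 + (1 - (1 - γ) * α n) ^ 2 * lam n) :
    Filter.Tendsto δ Filter.atTop (nhds (1 / (1 - γ))) := by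
  have hβ_pos : 0 < 1 - γ := by linarith
  have hlam_nonneg : ∀ n, 1 ≤ n → 0 ≤ lam n :=
    Nat.le_induction (by rw [hlam1]; norm_num) fun n hn _ => by rw [hlam n hn]; positivity
  have hα' : ∀ n, 1 ≤ n → α n = osaviStepSize (1 - γ) σ2 c (lam n) (1 - (1 - γ) * δ n) := hα
  have herror : Tendsto (fun n => 1 - (1 - γ) * δ (n + 1)) atTop (𝓝 0) := by
    refine tendsto_zero_of_osavi_error hβ_pos (by linarith) hσ hc
      (fun n => hlam_nonneg (n + 1) (by omega)) (by rw [zero_add, hδ1]; linarith) fun n => ?_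
    simp only [← hα' (n + 1) (by omega), hδ (n + 1) (by omega)]
    ring
  have hδ_lim := ((tendsto_const_nhds (x := (1 : ℝ))).sub herror).div_const (1 - γ)
  rw [sub_zero] at hδ_lim
  refine (tendsto_add_atTop_iff_nat 1).1 (hδ_lim.congr fun n => ?_)
  field_simp
  ring

theorem stmt_15 (γ c σ2 : ℝ) (hγ0 : 0 < γ) (hγ1 : γ < 1) (hσ : 0 < σ2) (hc : c ≠ 0)
    (α δ lam : ℕ → ℝ)
    (hα0 : α 0 = 1) (hδ1 : δ 1 = 1) (hlam1 : lam 1 = 1)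
    (hα : ∀ n : ℕ, 1 ≤ n →
      α n = ((1 - γ) * lam n * σ2 + (1 - (1 - γ) * δ n) ^ 2 * c ^ 2) /
            ((1 - γ) ^ 2 * lam n * σ2 + (1 - (1 - γ) * δ n) ^ 2 * c ^ 2 + σ2))
    (hδ : ∀ n : ℕ, 1 ≤ n → δ (n + 1) = α n + (1 - (1 - γ) * α n) * δ n)
    (hlam : ∀ n : ℕ, 1 ≤ n → lam (n + 1) = (α n) ^ 2 + (1 - (1 - γ) * α n) ^ 2 * lam n) :
    Filter.Tendsto δ Filter.atTop (nhds (1 / (1 - γ))) :=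
  stmt_15_general γ c σ2 hγ0 hγ1 hσ hc α δ lam hδ1 hlam1 hα hδ hlam
end

section
/- Under the OSAVI recursion with $\alpha_0 = 1$ and $c \ne 0$, $\lim_{n\to\infty} \lambda^n = 0$ and consequently $\lim_{n\to\infty} \alpha_{n-1} = 0$. -/
set_option maxHeartbeats 2000000 in
theorem stmt_16 (γ c σ2 : ℝ) (hγ0 : 0 < γ) (hγ1 : γ < 1) (hσ : 0 < σ2) (hc : c ≠ 0)
    (α δ lam : ℕ → ℝ)
    (hα0 : α 0 = 1) (hδ1 : δ 1 = 1) (hlam1 : lam 1 = 1)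
    (hα : ∀ n : ℕ, 1 ≤ n →
      α n = ((1 - γ) * lam n * σ2 + (1 - (1 - γ) * δ n) ^ 2 * c ^ 2) /
            ((1 - γ) ^ 2 * lam n * σ2 + (1 - (1 - γ) * δ n) ^ 2 * c ^ 2 + σ2))
    (hδ : ∀ n : ℕ, 1 ≤ n → δ (n + 1) = α n + (1 - (1 - γ) * α n) * δ n)
    (hlam : ∀ n : ℕ, 1 ≤ n → lam (n + 1) = (α n) ^ 2 + (1 - (1 - γ) * α n) ^ 2 * lam n) :
    Filter.Tendsto lam Filter.atTop (nhds 0) ∧ Filter.Tendsto α Filter.atTop (nhds 0) := by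
  have hβ0 : 0 < 1 - γ := by linarith
  set β : ℝ := 1 - γ with hβdef
  have hβ1 : β < 1 := by rw [hβdef]; linarith
  set E : ℕ → ℝ := fun n => 1 - β * δ n with hE
  set D : ℕ → ℝ := fun n => β ^ 2 * lam n * σ2 + E n ^ 2 * c ^ 2 + σ2 with hD
  have hEn : ∀ n, E n = 1 - β * δ n := fun n => rfl
  have hDn : ∀ n, D n = β ^ 2 * lam n * σ2 + E n ^ 2 * c ^ 2 + σ2 := fun n => rfl
  clear_value β E D
  have hα' : ∀ n, 1 ≤ n → α n = (β * lam n * σ2 + E n ^ 2 * c ^ 2) / D n := by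
    intro n hn; rw [hα n hn, hDn, hEn]
  have hc2 : 0 < c ^ 2 := by positivity
  have hDpos : ∀ n, 0 ≤ lam n → 0 < D n := by
    intro n h
    have h1 : 0 ≤ β ^ 2 * lam n * σ2 := by positivity
    have h2 : 0 ≤ E n ^ 2 * c ^ 2 := by positivity
    rw [hDn]; linarith
  have hE' : ∀ n, 1 ≤ n → E (n + 1) = (1 - β * α n) * E n := by
    intro n hn; rw [hEn, hEn, hδ n hn]; ring
  -- the factor identity
  have hfac : ∀ n, 1 ≤ n → 0 ≤ lam n → 1 - β * α n = (σ2 + γ * E n ^ 2 * c ^ 2) / D n := by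
    intro n hn hl
    have hD0 := hDpos n hl
    rw [hα' n hn]
    field_simp
    rw [hDn, hβdef]
    ring
  -- per-step facts given positivity of lam
  have hfacts : ∀ n, 1 ≤ n → 0 < lam n →
      0 < α n ∧ 0 < 1 - β * α n ∧ 1 - β * α n < 1 := by
    intro n hn hl
    have hD0 := hDpos n hl.le
    have hN : 0 < β * lam n * σ2 + E n ^ 2 * c ^ 2 := by
      have h1 : 0 < β * lam n * σ2 := by positivity
      have h2 : 0 ≤ E n ^ 2 * c ^ 2 := by positivity
      linarith
    refine ⟨?_, ?_, ?_⟩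
    · rw [hα' n hn]; exact div_pos hN hD0
    · rw [hfac n hn hl.le]
      apply div_pos _ hD0
      have : 0 ≤ γ * E n ^ 2 * c ^ 2 := by positivity
      linarith
    · rw [hfac n hn hl.le, div_lt_one hD0, hDn]
      have h1 : 0 < β ^ 2 * lam n * σ2 := by positivity
      have h2 : 0 ≤ E n ^ 2 * c ^ 2 := by positivity
      nlinarith
  -- main invariant
  have inv : ∀ n, 1 ≤ n → 0 < lam n ∧ β ^ 2 * lam n ≤ 1 ∧ 0 < E n ∧ E n ≤ γ := by
    intro n hn
    induction n, hn using Nat.le_induction with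
    | base =>
      refine ⟨by rw [hlam1]; norm_num, by rw [hlam1]; nlinarith, ?_, ?_⟩
      · rw [hEn, hδ1, hβdef]; linarith
      · rw [hEn, hδ1, hβdef]; linarith
    | succ n hn ih =>
      obtain ⟨hl, hlle, hEp, hEg⟩ := ih
      obtain ⟨hαp, hr0, hr1⟩ := hfacts n hn hl
      have hlam' := hlam n hn
      refine ⟨?_, ?_, ?_, ?_⟩
      · rw [hlam']; nlinarith
      · rw [hlam']
        have hba : 0 ≤ β * α n := by positivity
        nlinarith [sq_nonneg (1 - β * α n), mul_nonneg hba hr0.le]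
      · rw [hE' n hn]; exact mul_pos hr0 hEp
      · rw [hE' n hn]; nlinarith
  have hlpos : ∀ n, 1 ≤ n → 0 < lam n := fun n hn => (inv n hn).1
  have hlle : ∀ n, 1 ≤ n → β ^ 2 * lam n ≤ 1 := fun n hn => (inv n hn).2.1
  have hEpos : ∀ n, 1 ≤ n → 0 < E n := fun n hn => (inv n hn).2.2.1
  have hEle : ∀ n, 1 ≤ n → E n ≤ γ := fun n hn => (inv n hn).2.2.2
  have hEdec : ∀ n, 1 ≤ n → E (n + 1) ≤ E n := by
    intro n hn
    obtain ⟨_, hr0, hr1⟩ := hfacts n hn (hlpos n hn)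
    rw [hE' n hn]
    nlinarith [hEpos n hn]
  -- geometric contraction step under a lower bound on E
  have hEstep : ∀ e : ℝ, 0 < e → ∀ n, 1 ≤ n → e ≤ E n →
      E (n + 1) ≤ ((σ2 + γ * e ^ 2 * c ^ 2) / (σ2 + e ^ 2 * c ^ 2)) * E n := by
    intro e he n hn hle
    have hl := hlpos n hn
    have hD0 := hDpos n hl.le
    have hEp := hEpos n hn
    have hden : 0 < σ2 + e ^ 2 * c ^ 2 := by positivity
    rw [hE' n hn, hfac n hn hl.le]
    apply mul_le_mul_of_nonneg_right _ hEp.le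
    rw [div_le_div_iff₀ hD0 hden, hDn]
    have he2 : e ^ 2 ≤ E n ^ 2 := by nlinarith
    nlinarith [mul_nonneg (mul_nonneg (sub_nonneg.2 he2) hσ.le) hc2.le,
      mul_nonneg (mul_nonneg (mul_nonneg (by positivity : (0:ℝ) ≤ σ2 + γ * e ^ 2 * c ^ 2)
        (sq_nonneg β)) hl.le) hσ.le]
  -- E tends to 0
  have hEtend : Filter.Tendsto E Filter.atTop (nhds 0) := by
    have hFanti : Antitone (fun n => E (n + 1)) :=
      antitone_nat_of_succ_le fun n => hEdec (n + 1) (by omega)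
    have hFbdd : BddBelow (Set.range fun n => E (n + 1)) :=
      ⟨0, by rintro x ⟨n, rfl⟩; exact (hEpos (n + 1) (by omega)).le⟩
    have hFtend := tendsto_atTop_ciInf hFanti hFbdd
    have heF : ∀ n, (⨅ n, E (n + 1)) ≤ E (n + 1) := fun n => ciInf_le hFbdd n
    have habs : ∀ e : ℝ, 0 < e → (∀ n, e ≤ E (n + 1)) → e ≤ 0 := by
      intro e hepos heF
      have hden : 0 < σ2 + e ^ 2 * c ^ 2 := by positivity
      have hr0 : 0 ≤ (σ2 + γ * e ^ 2 * c ^ 2) / (σ2 + e ^ 2 * c ^ 2) := by positivity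
      have hr1 : (σ2 + γ * e ^ 2 * c ^ 2) / (σ2 + e ^ 2 * c ^ 2) < 1 := by
        rw [div_lt_one hden]
        nlinarith [mul_pos (mul_pos hepos hepos) hc2]
      have hgeo : ∀ k, E (k + 1) ≤ γ * ((σ2 + γ * e ^ 2 * c ^ 2) / (σ2 + e ^ 2 * c ^ 2)) ^ k := by
        intro k
        induction k with
        | zero => simpa using hEle 1 le_rfl
        | succ k ih =>
          have h1 := hEstep e hepos (k + 1) (by omega) (heF k)
          calc E (k + 1 + 1) ≤ ((σ2 + γ * e ^ 2 * c ^ 2) / (σ2 + e ^ 2 * c ^ 2)) * E (k + 1) := h1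
            _ ≤ ((σ2 + γ * e ^ 2 * c ^ 2) / (σ2 + e ^ 2 * c ^ 2)) *
                (γ * ((σ2 + γ * e ^ 2 * c ^ 2) / (σ2 + e ^ 2 * c ^ 2)) ^ k) :=
                mul_le_mul_of_nonneg_left ih hr0
            _ = γ * ((σ2 + γ * e ^ 2 * c ^ 2) / (σ2 + e ^ 2 * c ^ 2)) ^ (k + 1) := by ring
      have htend0 : Filter.Tendsto
          (fun k => γ * ((σ2 + γ * e ^ 2 * c ^ 2) / (σ2 + e ^ 2 * c ^ 2)) ^ k)
          Filter.atTop (nhds 0) := by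
        have := tendsto_pow_atTop_nhds_zero_of_lt_one hr0 hr1
        simpa using this.const_mul γ
      exact ge_of_tendsto htend0 (Filter.Eventually.of_forall fun k => (heF k).trans (hgeo k))
    have he0 : (⨅ n, E (n + 1)) = 0 := by
      rcases eq_or_lt_of_le (le_ciInf fun n => (hEpos (n + 1) (by omega)).le :
          (0:ℝ) ≤ ⨅ n, E (n + 1)) with h | h
      · exact h.symm
      · exact absurd (habs _ h fun n => heF n) (by linarith)
    rw [← Filter.tendsto_add_atTop_iff_nat 1]
    rw [he0] at hFtend
    exact hFtend
  -- polynomial identity for the lam recursion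
  have hiden : ∀ n, 1 ≤ n →
      lam (n + 1) * ((1 + β ^ 2 * lam n) * D n ^ 2) =
      lam n * D n ^ 2 + (E n ^ 2 * c ^ 2) ^ 2 * (1 - γ * β * lam n) ^ 2 := by
    intro n hn
    have hl := hlpos n hn
    have hD0 := (hDpos n hl.le).ne'
    rw [hlam n hn, hα' n hn]
    field_simp
    rw [hDn, hβdef]
    ring
  -- quantitative drop inequalities
  have hσ2 : (0:ℝ) < σ2 ^ 2 := by positivity
  have hb2 : (0:ℝ) < β ^ 2 := by positivity
  have hQgen : ∀ n, 1 ≤ n →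
      lam (n + 1) * (1 + β ^ 2 * lam n) - lam n ≤ c ^ 4 / (β ^ 2 * σ2 ^ 2) * E n ^ 4 := by
    intro n hn
    have hl := hlpos n hn
    have hll := hlle n hn
    have hD0 := hDpos n hl.le
    have hDσ : σ2 ≤ D n := by
      rw [hDn]
      nlinarith [mul_nonneg (mul_nonneg (sq_nonneg β) hl.le) hσ.le,
        mul_nonneg (sq_nonneg (E n)) hc2.le]
    have key : (lam (n + 1) * (1 + β ^ 2 * lam n) - lam n) * D n ^ 2 =
        (E n ^ 2 * c ^ 2) ^ 2 * (1 - γ * β * lam n) ^ 2 := by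
      linear_combination hiden n hn
    have hgb : (1 - γ * β * lam n) ^ 2 ≤ 1 / β ^ 2 := by
      rw [le_div_iff₀ hb2]
      have h1 : 0 ≤ γ * (β ^ 2 * lam n) := by positivity
      have h2 : γ * (β ^ 2 * lam n) ≤ γ := by nlinarith
      nlinarith [mul_nonneg (by nlinarith : (0:ℝ) ≤ 1 - (β - γ * (β ^ 2 * lam n)))
        (by nlinarith : (0:ℝ) ≤ 1 + (β - γ * (β ^ 2 * lam n)))]
    have hub : (lam (n + 1) * (1 + β ^ 2 * lam n) - lam n) * D n ^ 2 ≤ E n ^ 4 * c ^ 4 / β ^ 2 := by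
      rw [key]
      calc (E n ^ 2 * c ^ 2) ^ 2 * (1 - γ * β * lam n) ^ 2
          ≤ (E n ^ 2 * c ^ 2) ^ 2 * (1 / β ^ 2) := by
            exact mul_le_mul_of_nonneg_left hgb (by positivity)
        _ = E n ^ 4 * c ^ 4 / β ^ 2 := by ring
    have h3 : (lam (n + 1) * (1 + β ^ 2 * lam n) - lam n) * σ2 ^ 2 ≤ E n ^ 4 * c ^ 4 / β ^ 2 := by
      rcases le_or_gt (lam (n + 1) * (1 + β ^ 2 * lam n) - lam n) 0 with h | h
      · have h0 : (0:ℝ) ≤ E n ^ 4 * c ^ 4 / β ^ 2 := by positivity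
        nlinarith [mul_nonneg (neg_nonneg.2 h) hσ2.le]
      · have hDD : σ2 ^ 2 ≤ D n ^ 2 := by nlinarith
        calc (lam (n + 1) * (1 + β ^ 2 * lam n) - lam n) * σ2 ^ 2
            ≤ (lam (n + 1) * (1 + β ^ 2 * lam n) - lam n) * D n ^ 2 :=
              mul_le_mul_of_nonneg_left hDD h.le
          _ ≤ E n ^ 4 * c ^ 4 / β ^ 2 := hub
    have h4 : lam (n + 1) * (1 + β ^ 2 * lam n) - lam n ≤ E n ^ 4 * c ^ 4 / β ^ 2 / σ2 ^ 2 := by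
      rwa [← le_div_iff₀ hσ2] at h3
    have h5 : E n ^ 4 * c ^ 4 / β ^ 2 / σ2 ^ 2 = c ^ 4 / (β ^ 2 * σ2 ^ 2) * E n ^ 4 := by
      field_simp
    linarith [h4, h5.le, h5.ge]
  have hQ1 : ∀ n, 1 ≤ n → lam (n + 1) ≤ lam n + c ^ 4 / (β ^ 2 * σ2 ^ 2) * E n ^ 4 := by
    intro n hn
    have h := hQgen n hn
    have hself : 0 ≤ lam (n + 1) * (β ^ 2 * lam n) :=
      mul_nonneg (hlpos (n + 1) (by omega)).le (mul_nonneg hb2.le (hlpos n hn).le)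
    nlinarith
  have hQ2 : ∀ n, 1 ≤ n → ∀ t : ℝ, 0 < t → t ≤ lam n →
      lam (n + 1) ≤ lam n - β ^ 2 * t ^ 2 / 2 + c ^ 4 / (β ^ 2 * σ2 ^ 2) * E n ^ 4 := by
    intro n hn t ht hle
    have h := hQgen n hn
    have hl := hlpos n hn
    have hll := hlle n hn
    have hε : (0:ℝ) ≤ c ^ 4 / (β ^ 2 * σ2 ^ 2) * E n ^ 4 := by positivity
    have hd2 : β ^ 2 * t ^ 2 / 2 ≤ t / 2 := by
      nlinarith [mul_nonneg (mul_nonneg hb2.le ht.le) (sub_nonneg.2 hle),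
        mul_nonneg (sub_nonneg.2 hll) ht.le]
    by_contra hcon
    push_neg at hcon
    have h6 : t / 2 ≤ lam (n + 1) := by linarith
    have h7 : β ^ 2 * t ≤ β ^ 2 * lam n := by nlinarith
    have h8 : (t / 2) * (β ^ 2 * t) ≤ lam (n + 1) * (β ^ 2 * lam n) :=
      mul_le_mul h6 h7 (by positivity) (hlpos (n + 1) (by omega)).le
    nlinarith
  -- the error term tends to 0
  have hεtend : Filter.Tendsto (fun n => c ^ 4 / (β ^ 2 * σ2 ^ 2) * E n ^ 4)
      Filter.atTop (nhds 0) := by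
    have h4 : Filter.Tendsto (fun n => E n ^ 4) Filter.atTop (nhds 0) := by
      have := hEtend.pow 4
      simpa using this
    have := h4.const_mul (c ^ 4 / (β ^ 2 * σ2 ^ 2))
    simpa using this
  -- lam tends to 0
  have hlamtend : Filter.Tendsto lam Filter.atTop (nhds 0) := by
    rw [Metric.tendsto_atTop]
    intro ε hε
    have ht0 : 0 < ε / 4 := by positivity
    have hd0 : 0 < β ^ 2 * (ε / 4) ^ 2 / 2 := by positivity
    obtain ⟨N₀, hN₀⟩ := Metric.tendsto_atTop.mp hεtend
      (min (β ^ 2 * (ε / 4) ^ 2 / 2 / 2) (ε / 4)) (by positivity)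
    have hN1 : 1 ≤ max N₀ 1 := le_max_right _ _
    have hsm : ∀ n, max N₀ 1 ≤ n →
        c ^ 4 / (β ^ 2 * σ2 ^ 2) * E n ^ 4 < min (β ^ 2 * (ε / 4) ^ 2 / 2 / 2) (ε / 4) := by
      intro n hn
      have := hN₀ n (le_trans (le_max_left _ _) hn)
      rwa [Real.dist_eq, sub_zero, abs_of_nonneg (by positivity)] at this
    have hex : ∃ m, max N₀ 1 ≤ m ∧ lam m < ε / 4 := by
      by_contra hno
      push_neg at hno
      have hdec : ∀ k : ℕ, lam (max N₀ 1 + k) ≤ lam (max N₀ 1) - k * (β ^ 2 * (ε / 4) ^ 2 / 2 / 2) := by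
        intro k
        induction k with
        | zero => simp
        | succ k ih =>
          have hk1 : 1 ≤ max N₀ 1 + k := le_trans hN1 (Nat.le_add_right _ _)
          have hkN : max N₀ 1 ≤ max N₀ 1 + k := Nat.le_add_right _ _
          have h2 := hQ2 (max N₀ 1 + k) hk1 (ε / 4) ht0 (hno _ hkN)
          have h3 := (hsm (max N₀ 1 + k) hkN).le
          have hmin : min (β ^ 2 * (ε / 4) ^ 2 / 2 / 2) (ε / 4) ≤ β ^ 2 * (ε / 4) ^ 2 / 2 / 2 :=
            min_le_left _ _
          have harith : lam (max N₀ 1 + (k + 1)) ≤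
              lam (max N₀ 1 + k) - β ^ 2 * (ε / 4) ^ 2 / 2 / 2 := by
            have : max N₀ 1 + (k + 1) = max N₀ 1 + k + 1 := by omega
            rw [this]
            linarith
          push_cast
          push_cast at ih
          linarith
      obtain ⟨k, hk⟩ := exists_nat_gt ((lam (max N₀ 1) - ε / 4) / (β ^ 2 * (ε / 4) ^ 2 / 2 / 2))
      rw [div_lt_iff₀ (by positivity)] at hk
      have := hdec k
      have hcontra := hno (max N₀ 1 + k) (Nat.le_add_right _ _)
      nlinarith
    obtain ⟨m, hmN, hmt⟩ := hex
    refine ⟨m, fun n hn => ?_⟩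
    have hinv2 : ∀ n, m ≤ n → lam n < 2 * (ε / 4) := by
      intro n hn
      induction n, hn using Nat.le_induction with
      | base => linarith
      | succ n hn ih =>
        have h1n : 1 ≤ n := le_trans hN1 (le_trans hmN hn)
        have hNn : max N₀ 1 ≤ n := le_trans hmN hn
        have hsm' := (hsm n hNn).le
        have hminl : min (β ^ 2 * (ε / 4) ^ 2 / 2 / 2) (ε / 4) ≤ β ^ 2 * (ε / 4) ^ 2 / 2 / 2 :=
          min_le_left _ _
        have hminr : min (β ^ 2 * (ε / 4) ^ 2 / 2 / 2) (ε / 4) ≤ ε / 4 := min_le_right _ _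
        rcases lt_or_ge (lam n) (ε / 4) with h | h
        · have := hQ1 n h1n
          linarith
        · have := hQ2 n h1n (ε / 4) ht0 h
          linarith
    have h1n : 1 ≤ n := le_trans hN1 (le_trans hmN hn)
    rw [Real.dist_eq, sub_zero, abs_of_nonneg (hlpos n h1n).le]
    have := hinv2 n hn
    linarith
  refine ⟨hlamtend, ?_⟩
  -- α tends to 0 by squeezing
  have hg : Filter.Tendsto (fun n => (β * lam n * σ2 + E n ^ 2 * c ^ 2) / σ2)
      Filter.atTop (nhds 0) := by
    have h1 : Filter.Tendsto (fun n => β * lam n * σ2) Filter.atTop (nhds 0) := by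
      have := (hlamtend.const_mul β).mul_const σ2
      simpa using this
    have h2 : Filter.Tendsto (fun n => E n ^ 2 * c ^ 2) Filter.atTop (nhds 0) := by
      have := (hEtend.pow 2).mul_const (c ^ 2)
      simpa using this
    have := (h1.add h2).div_const σ2
    simpa using this
  apply squeeze_zero' ?_ ?_ hg
  · filter_upwards [Filter.eventually_ge_atTop 1] with n hn
    exact le_of_lt (hfacts n hn (hlpos n hn)).1
  · filter_upwards [Filter.eventually_ge_atTop 1] with n hn
    rw [hα' n hn]
    have hl := hlpos n hn
    have hD0 := hDpos n hl.le
    have hDσ : σ2 ≤ D n := by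
      rw [hDn]
      nlinarith [mul_nonneg (mul_nonneg (sq_nonneg β) hl.le) hσ.le,
        mul_nonneg (sq_nonneg (E n)) hc2.le]
    have hN : 0 ≤ β * lam n * σ2 + E n ^ 2 * c ^ 2 := by positivity
    rw [div_le_div_iff₀ hD0 hσ]
    nlinarith [mul_le_mul_of_nonneg_left hDσ hN]
end
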